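/- Let $U_1,\ldots,U_n \subseteq \mathbb{R}^p$ be linear subspaces, let $G = (\{1,\ldots,n\},\mathcal{E})$ be a connected oriented graph with $(i,j) \in \mathcal{E} \Rightarrow i < j$, let $G' \subseteq G$ be a connected spanning subgraph with Laplacian $L$, and let $Z \in \mathbb{R}^{n \times (n-1)}$ be full column rank with $L = Z Z^{\mathsf{T}}$. Fix $\theta \in (0,2)$ and initial points $v_1^0,\ldots,v_{n-1}^0 \in \mathbb{R}^p$, and consider the graph-based Douglas–Rachford iteration $x_i^{k+1} = P_{U_i}\big( \tfrac{2}{d_i} \sum_{(h,i) \in \mathcal{E}} x_h^{k+1} + \tfrac{1}{d_i} \sum_{j=1}^{n-1} Z_{i,j} v_j^k \big)$ for $i = 1,\ldots,n$, followed by $v_j^{k+1} = v_j^k - \theta \sum_{i=1}^n Z_{i,j} x_i^{k+1}$ for $j = 1,\ldots,n-1$. Then there exist $v_1^*,\ldots,v_{n-1}^* \in \mathbb{R}^p$ and $x^* \in \bigcap_{i=1}^n U_i$ such that $v_j^k \to v_j^*$ for all $j$, $x_i^k \to x^*$ for all $i$, and $x^* = \tfrac{2 d_i^{\mathrm{in}}}{d_i}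 P_{U_i}(x^*) + \tfrac{1}{d_i} \sum_{j=1}^{n-1} P_{U_i}(Z_{i,j} v_j^*)$ for every $i = 1,\ldots,n$. -/

import Mathlib

/-!
Since every edge points to a larger index, `x^{k+1}` is the unique solution of its defining
equations and depends linearly on `v^k`, so the dual update is a linear map `T` on
`(ℝ^p)^{n-1}` with the Euclidean norm. Writing `x` for the primal point computed from `v`, the
identity `⟪y, P_U y⟫ = ‖P_U y‖²` at every node gives `⟪v, Zᵀx⟫ = ∑_{(h,i) ∈ 𝓔} ‖x_h - x_i‖²`,
while `L = ZZᵀ` gives `‖Zᵀx‖² = ∑_{(h,i) ∈ 𝓔'} ‖x_h - x_i‖²`, which is smaller. Hence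
`‖Tv‖² + (2 - θ)/θ ‖v - Tv‖² ≤ ‖v‖²`, and in finite dimension the iterates of such a map
converge to a fixed point: the steps `v - Tv` are square-summable, a cluster point is fixed,
and the distance to a fixed point never increases. At a fixed point `Zᵀx = 0`, so `x` is
constant along the edges of the connected graph `G'`; this common value is `x*`.
-/

open Filter Topology Matrix

noncomputable def proj {p : ℕ} (U : Submodule ℝ (EuclideanSpace ℝ (Fin p)))
    (v : EuclideanSpace ℝ (Fin p)) : EuclideanSpace ℝ (Fin p) :=
  (Submodule.orthogonalProjection U v : EuclideanSpace ℝ (Fin p))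

def din {n : ℕ} (E : Finset (Fin n × Fin n)) (i : Fin n) : ℕ :=
  (E.filter fun e => e.2 = i).card

def dout {n : ℕ} (E : Finset (Fin n × Fin n)) (i : Fin n) : ℕ :=
  (E.filter fun e => e.1 = i).card

def deg {n : ℕ} (E : Finset (Fin n × Fin n)) (i : Fin n) : ℕ :=
  din E i + dout E i

noncomputable def lap {n : ℕ} (E : Finset (Fin n × Fin n)) :
    Matrix (Fin n) (Fin n) ℝ :=
  Matrix.of fun i j =>
    if i = j then (deg E i : ℝ) else if (i, j) ∈ E ∨ (j, i) ∈ E then -1 else 0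

open RealInnerProductSpace Function Finset

theorem tendsto_zero_of_add_le {b d : ℕ → ℝ} (hb : ∀ k, 0 ≤ b k) (hd : ∀ k, 0 ≤ d k)
    (h : ∀ k, b (k + 1) + d k ≤ b k) : Tendsto d atTop (𝓝 0) := by
  have htel (N : ℕ) : ∑ k ∈ range N, d k ≤ b 0 - b N := by
    induction N with
    | zero => simp
    | succ N ih => rw [sum_range_succ]; linarith [h N]
  exact (summable_of_sum_range_le hd fun N => (htel N).trans (by linarith [hb N]))
    |>.tendsto_atTop_zero

theorem LinearMap.exists_isFixedPt_tendsto_iterate {E : Type*} [NormedAddCommGroup E]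
    [NormedSpace ℝ E] [FiniteDimensional ℝ E] (T : E →ₗ[ℝ] E) {c : ℝ} (hc : 0 < c)
    (hT : ∀ w, ‖T w‖ ^ 2 + c * ‖w - T w‖ ^ 2 ≤ ‖w‖ ^ 2) (w₀ : E) :
    ∃ w, IsFixedPt T w ∧ Tendsto (fun k => T^[k] w₀) atTop (𝓝 w) := by
  set w : ℕ → E := fun k => T^[k] w₀
  have hsucc (k : ℕ) : w (k + 1) = T (w k) := iterate_succ_apply' T k w₀
  have hnonexp (u : E) : ‖T u‖ ≤ ‖u‖ :=
    pow_le_pow_iff_left₀ (norm_nonneg _) (norm_nonneg _) two_ne_zero |>.mp <| by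
      nlinarith [hT u, sq_nonneg ‖u - T u‖]
  have hreg : Tendsto (fun k => w k - T (w k)) atTop (𝓝 0) := by
    have h := tendsto_zero_of_add_le (b := fun k => ‖w k‖ ^ 2)
      (d := fun k => c * ‖w k - T (w k)‖ ^ 2) (fun _ => by positivity) (fun _ => by positivity)
      fun k => by simpa only [hsucc] using hT (w k)
    have h' := (h.const_mul c⁻¹).sqrt
    simp only [← mul_assoc, inv_mul_cancel₀ hc.ne', one_mul, mul_zero, Real.sqrt_zero,
      Real.sqrt_sq (norm_nonneg _)] at h'
    exact tendsto_zero_iff_norm_tendsto_zero.mpr h'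
  have hbdd (k : ℕ) : w k ∈ Metric.closedBall 0 ‖w₀‖ := by
    rw [mem_closedBall_zero_iff]
    induction k with
    | zero => exact le_rfl
    | succ k ih => exact (hsucc k ▸ hnonexp _).trans ih
  obtain ⟨w', -, φ, hφ, hlim⟩ := tendsto_subseq_of_bounded Metric.isBounded_closedBall hbdd
  have hfix : IsFixedPt T w' := by
    have h1 : Tendsto (fun k => w (φ k) - T (w (φ k))) atTop (𝓝 (w' - T w')) :=
      hlim.sub ((T.continuous_of_finiteDimensional.tendsto w').comp hlim)
    exact (sub_eq_zero.mp (tendsto_nhds_unique h1 (hreg.comp hφ.tendsto_atTop))).symm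
  refine ⟨w', hfix, tendsto_iff_norm_sub_tendsto_zero.mpr ?_⟩
  have hanti : Antitone fun k => ‖w k - w'‖ := antitone_nat_of_succ_le fun k => by
    simpa only [hsucc, map_sub, hfix.eq] using hnonexp (w k - w')
  obtain ⟨L, hL⟩ : ∃ L, Tendsto (fun k => ‖w k - w'‖) atTop (𝓝 L) :=
    ⟨_, tendsto_atTop_ciInf hanti ⟨0, fun _ ⟨_, h⟩ => h ▸ norm_nonneg _⟩⟩
  have hL0 : Tendsto (fun k => ‖w (φ k) - w'‖) atTop (𝓝 0) :=
    tendsto_iff_norm_sub_tendsto_zero.mp hlim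
  rwa [tendsto_nhds_unique (hL.comp hφ.tendsto_atTop) hL0] at hL

theorem SimpleGraph.Preconnected.eq_of_forall_adj {V α : Type*} {G : SimpleGraph V}
    (hG : G.Preconnected) {f : V → α} (hf : ∀ a b, G.Adj a b → f a = f b) (a b : V) :
    f a = f b := by
  obtain ⟨p⟩ := hG a b
  induction p with
  | nil => rfl
  | cons hadj _ ih => exact (hf _ _ hadj).trans ih

theorem Fintype.sum_sum_ite_mem {α β M : Type*} [Fintype α] [Fintype β] [DecidableEq α]
    [DecidableEq β] [AddCommMonoid M] (s : Finset (α × β)) (g : α → β → M) :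
    ∑ a, ∑ b, (if (a, b) ∈ s then g a b else 0) = ∑ e ∈ s, g e.1 e.2 := by
  rw [← Fintype.sum_prod_type' (f := fun a b => if (a, b) ∈ s then g a b else 0)]
  exact Fintype.sum_ite_mem s _

section Degrees

variable {n : ℕ} {M : Type*} [AddCommMonoid M] (𝓔 : Finset (Fin n × Fin n))

theorem sum_din_smul (f : Fin n → M) : ∑ i, din 𝓔 i • f i = ∑ e ∈ 𝓔, f e.2 := by
  simp only [din, ← sum_const, sum_fiberwise']

theorem sum_dout_smul (f : Fin n → M) : ∑ i, dout 𝓔 i • f i = ∑ e ∈ 𝓔, f e.1 := by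
  simp only [dout, ← sum_const, sum_fiberwise']

theorem sum_deg_smul (f : Fin n → M) : ∑ i, deg 𝓔 i • f i = ∑ e ∈ 𝓔, (f e.1 + f e.2) := by
  simp only [deg, add_smul, sum_add_distrib, sum_din_smul, sum_dout_smul, add_comm]

theorem lap_apply (h𝓔 : ∀ e ∈ 𝓔, e.1 < e.2) (i l : Fin n) :
    lap 𝓔 i l = (if i = l then (deg 𝓔 i : ℝ) else 0)
      - ((if (i, l) ∈ 𝓔 then 1 else 0) + (if (l, i) ∈ 𝓔 then 1 else 0)) := by
  have hloop (a : Fin n) : (a, a) ∉ 𝓔 := fun ha => lt_irrefl _ (h𝓔 _ ha)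
  have hanti : ¬((i, l) ∈ 𝓔 ∧ (l, i) ∈ 𝓔) := fun ⟨h1, h2⟩ =>
    lt_asymm (h𝓔 _ h1) (h𝓔 _ h2)
  rcases eq_or_ne i l with rfl | hne
  · simp [lap, hloop]
  · by_cases h1 : (i, l) ∈ 𝓔 <;> by_cases h2 : (l, i) ∈ 𝓔 <;> simp_all [lap]

end Degrees

section InnerProduct

variable {E : Type*} [NormedAddCommGroup E] [InnerProductSpace ℝ E]

theorem sum_lap_mul_inner {n : ℕ} {𝓔 : Finset (Fin n × Fin n)} (h𝓔 : ∀ e ∈ 𝓔, e.1 < e.2)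
    (u : Fin n → E) :
    ∑ i, ∑ l, lap 𝓔 i l * ⟪u i, u l⟫ = ∑ e ∈ 𝓔, ‖u e.1 - u e.2‖ ^ 2 := by
  have hdiag : ∑ i, ∑ l, (if i = l then (deg 𝓔 i : ℝ) else 0) * ⟪u i, u l⟫
      = ∑ e ∈ 𝓔, (‖u e.1‖ ^ 2 + ‖u e.2‖ ^ 2) := by
    simp only [ite_mul, zero_mul, sum_ite_eq, mem_univ, if_true, ← nsmul_eq_mul,
      real_inner_self_eq_norm_sq, sum_deg_smul]
  have hcross : ∑ i, ∑ l, ((if (i, l) ∈ 𝓔 then 1 else 0) + (if (l, i) ∈ 𝓔 then 1 else 0))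
      * ⟪u i, u l⟫ = ∑ e ∈ 𝓔, 2 * ⟪u e.1, u e.2⟫ := by
    simp only [add_mul, ite_mul, one_mul, zero_mul, sum_add_distrib]
    rw [Fintype.sum_sum_ite_mem, sum_comm,
      Fintype.sum_sum_ite_mem (g := fun l i => ⟪u i, u l⟫), ← sum_add_distrib]
    exact sum_congr rfl fun e _ => by rw [real_inner_comm (u e.1) (u e.2), two_mul]
  simp only [lap_apply 𝓔 h𝓔, sub_mul, sum_sub_distrib]
  rw [hdiag, hcross, ← sum_sub_distrib]
  exact sum_congr rfl fun _ _ => by rw [norm_sub_sq_real]; ring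

theorem sum_norm_sum_smul_sq {m ι : Type*} [Fintype m] [Fintype ι] (Z : Matrix m ι ℝ)
    (u : m → E) : ∑ j, ‖∑ i, Z i j • u i‖ ^ 2 = ∑ i, ∑ l, (Z * Zᵀ) i l * ⟪u i, u l⟫ := by
  simp only [← real_inner_self_eq_norm_sq, sum_inner, inner_sum, real_inner_smul_left,
    real_inner_smul_right, mul_apply, transpose_apply, sum_mul]
  rw [sum_comm]
  refine sum_congr rfl fun i _ => ?_
  rw [sum_comm]
  exact sum_congr rfl fun l _ => sum_congr rfl fun j _ => by
    rw [real_inner_comm (u i) (u l)]; ring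

theorem sum_norm_sum_smul_sq_of_lap_eq {n : ℕ} {ι : Type*} [Fintype ι]
    {𝓔 : Finset (Fin n × Fin n)} (h𝓔 : ∀ e ∈ 𝓔, e.1 < e.2) {Z : Matrix (Fin n) ι ℝ}
    (hL : lap 𝓔 = Z * Zᵀ) (u : Fin n → E) :
    ∑ j, ‖∑ i, Z i j • u i‖ ^ 2 = ∑ e ∈ 𝓔, ‖u e.1 - u e.2‖ ^ 2 := by
  rw [sum_norm_sum_smul_sq, ← hL, sum_lap_mul_inner h𝓔]

theorem Submodule.inner_eq_of_starProjection_two_div_smul_add_eq (K : Submodule ℝ E)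
    [K.HasOrthogonalProjection] {d : ℝ} {s w y : E}
    (hy : K.starProjection ((2 / d) • s + (1 / d) • w) = y) :
    ⟪w, y⟫ = d * ‖y‖ ^ 2 - 2 * ⟪s, y⟫ := by
  subst hy
  set a := (2 / d) • s + (1 / d) • w
  rcases eq_or_ne d 0 with rfl | hd
  · simp [a]
  have hw : w = d • a - (2 : ℝ) • s := by
    simp only [a, smul_add, smul_smul, mul_div_cancel₀ _ hd, one_smul]
    abel
  have ha : ⟪a, K.starProjection a⟫ = ‖K.starProjection a‖ ^ 2 := by
    rw [← real_inner_self_eq_norm_sq, ← sub_eq_zero, ← inner_sub_left]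
    exact K.starProjection_inner_eq_zero a _ (K.starProjection_apply_mem a)
  rw [hw, inner_sub_left, real_inner_smul_left, real_inner_smul_left, ha]

end InnerProduct

namespace GraphDR

variable {E : Type*} [NormedAddCommGroup E] [InnerProductSpace ℝ E]
  {n : ℕ} {ι : Type*} [Fintype ι] (U : Fin n → Submodule ℝ E)
  [∀ i, (U i).HasOrthogonalProjection] (𝓔 : Finset (Fin n × Fin n)) (Z : Matrix (Fin n) ι ℝ)

noncomputable def update (v : ι → E) (y : Fin n → E) (i : Fin n) : E :=
  (U i).starProjection (((2 : ℝ) / (deg 𝓔 i : ℝ)) • (∑ e ∈ 𝓔.filter fun e => e.2 = i, y e.1) +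
    ((1 : ℝ) / (deg 𝓔 i : ℝ)) • ∑ j, Z i j • v j)

/-- The guard `e.1 < i` only serves termination: it holds for every edge of an ordered edge set. -/
noncomputable def primal (v : ι → E) (i : Fin n) : E :=
  (U i).starProjection (((2 : ℝ) / (deg 𝓔 i : ℝ)) • (∑ e ∈ 𝓔.filter fun e => e.2 = i,
      if _ : e.1 < i then primal v e.1 else 0) + ((1 : ℝ) / (deg 𝓔 i : ℝ)) • ∑ j, Z i j • v j)
termination_by i

theorem primal_mem (v : ι → E) (i : Fin n) : primal U 𝓔 Z v i ∈ U i := by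
  rw [primal]
  exact (U i).starProjection_apply_mem _

theorem update_add (v v' : ι → E) (y y' : Fin n → E) :
    update U 𝓔 Z (v + v') (y + y') = update U 𝓔 Z v y + update U 𝓔 Z v' y' := by
  ext1 i
  simp only [update, Pi.add_apply, smul_add, sum_add_distrib, ← map_add]
  congr 1
  abel

theorem update_smul (c : ℝ) (v : ι → E) (y : Fin n → E) :
    update U 𝓔 Z (c • v) (c • y) = c • update U 𝓔 Z v y := by
  ext1 i
  simp only [update, Pi.smul_apply, ← smul_sum, smul_comm _ c, ← smul_add, map_smul]

theorem update_const (v : ι → E) (c : E) (i : Fin n) :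
    update U 𝓔 Z v (fun _ => c) i =
      ((2 * (din 𝓔 i : ℝ)) / (deg 𝓔 i : ℝ)) • (U i).starProjection c +
        ((1 : ℝ) / (deg 𝓔 i : ℝ)) • ∑ j, (U i).starProjection (Z i j • v j) := by
  rw [update, sum_const, ← Nat.cast_smul_eq_nsmul ℝ, smul_smul, map_add, map_smul, map_smul,
    map_sum, din, mul_div_right_comm]

variable {𝓔} (h𝓔 : ∀ e ∈ 𝓔, e.1 < e.2)
include h𝓔

theorem eq_of_isFixedPt_update {v : ι → E} {y y' : Fin n → E}
    (hy : IsFixedPt (update U 𝓔 Z v) y) (hy' : IsFixedPt (update U 𝓔 Z v) y') : y = y' := by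
  funext i
  induction i using WellFoundedLT.induction with
  | ind i ih =>
    rw [← hy, ← hy']
    simp only [update]
    congr 3
    refine sum_congr rfl fun e he => ?_
    rw [mem_filter] at he
    exact ih _ (he.2 ▸ h𝓔 e he.1)

theorem isFixedPt_update_primal (v : ι → E) :
    IsFixedPt (update U 𝓔 Z v) (primal U 𝓔 Z v) := by
  funext i
  rw [update, primal]
  congr 3
  refine sum_congr rfl fun e he => ?_
  rw [mem_filter] at he
  rw [dif_pos (he.2 ▸ h𝓔 e he.1)]

noncomputable def primalₗ : (ι → E) →ₗ[ℝ] Fin n → E where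
  toFun := primal U 𝓔 Z
  map_add' v v' := eq_of_isFixedPt_update U Z h𝓔 (isFixedPt_update_primal U Z h𝓔 _) <| by
    rw [IsFixedPt, update_add, isFixedPt_update_primal U Z h𝓔, isFixedPt_update_primal U Z h𝓔]
  map_smul' c v := eq_of_isFixedPt_update U Z h𝓔 (isFixedPt_update_primal U Z h𝓔 _) <| by
    rw [RingHom.id_apply, IsFixedPt, update_smul, isFixedPt_update_primal U Z h𝓔]

theorem sum_inner_primal (v : ι → E) :
    ∑ i, ⟪∑ j, Z i j • v j, primal U 𝓔 Z v i⟫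
      = ∑ e ∈ 𝓔, ‖primal U 𝓔 Z v e.1 - primal U 𝓔 Z v e.2‖ ^ 2 := by
  set x := primal U 𝓔 Z v
  have hnode (i : Fin n) : ⟪∑ j, Z i j • v j, x i⟫
      = deg 𝓔 i • ‖x i‖ ^ 2 - 2 * ∑ e ∈ 𝓔.filter fun e => e.2 = i, ⟪x e.1, x e.2⟫ := by
    rw [(U i).inner_eq_of_starProjection_two_div_smul_add_eq
      (congrFun (isFixedPt_update_primal U Z h𝓔 v) i), sum_inner, nsmul_eq_mul]
    congr 2
    exact sum_congr rfl fun e he => by rw [(mem_filter.mp he).2]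
  simp only [hnode]
  rw [sum_sub_distrib, sum_deg_smul, ← mul_sum, sum_fiberwise, mul_sum, ← sum_sub_distrib]
  exact sum_congr rfl fun e _ => by rw [norm_sub_sq_real]; ring

noncomputable def dualMap (θ : ℝ) : PiLp 2 (fun _ : ι => E) →ₗ[ℝ] PiLp 2 (fun _ : ι => E) where
  toFun w := WithLp.toLp 2 fun j => w j - θ • ∑ i, Z i j • primalₗ U Z h𝓔 w.ofLp i
  map_add' w w' := by
    ext j
    simp only [WithLp.ofLp_add, map_add, Pi.add_apply, smul_add, sum_add_distrib,
      PiLp.add_apply]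
    abel
  map_smul' c w := by
    ext j
    simp only [WithLp.ofLp_smul, map_smul, Pi.smul_apply, smul_sum, PiLp.smul_apply,
      smul_comm c, smul_sub, RingHom.id_apply]

theorem dualMap_apply (θ : ℝ) (w : PiLp 2 (fun _ : ι => E)) (j : ι) :
    dualMap U Z h𝓔 θ w j = w j - θ • ∑ i, Z i j • primal U 𝓔 Z w.ofLp i := rfl

theorem dualMap_toLp (θ : ℝ) (v : ι → E) :
    dualMap U Z h𝓔 θ (WithLp.toLp 2 v) =
      WithLp.toLp 2 fun j => v j - θ • ∑ i, Z i j • primal U 𝓔 Z v i := rfl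

theorem norm_dualMap_sq_add_le {𝓔' : Finset (Fin n × Fin n)} (hsub : 𝓔' ⊆ 𝓔)
    (hL : lap 𝓔' = Z * Zᵀ) {θ : ℝ} (hθ : 0 < θ) (w : PiLp 2 (fun _ : ι => E)) :
    ‖dualMap U Z h𝓔 θ w‖ ^ 2 + (2 - θ) / θ * ‖w - dualMap U Z h𝓔 θ w‖ ^ 2 ≤ ‖w‖ ^ 2 := by
  set x := primal U 𝓔 Z w.ofLp
  set g : ι → E := fun j => ∑ i, Z i j • x i
  have hS : ∑ j, ⟪w j, g j⟫ = ∑ e ∈ 𝓔, ‖x e.1 - x e.2‖ ^ 2 := by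
    rw [← sum_inner_primal U Z h𝓔]
    simp only [g, x, inner_sum, sum_inner, real_inner_smul_left, real_inner_smul_right]
    exact sum_comm
  have hS' : ∑ j, ‖g j‖ ^ 2 ≤ ∑ e ∈ 𝓔, ‖x e.1 - x e.2‖ ^ 2 := by
    rw [sum_norm_sum_smul_sq_of_lap_eq (fun e he => h𝓔 e (hsub he)) hL]
    exact sum_le_sum_of_subset_of_nonneg hsub fun _ _ _ => sq_nonneg _
  have hT : ‖dualMap U Z h𝓔 θ w‖ ^ 2
      = ∑ j, (‖w j‖ ^ 2 - 2 * θ * ⟪w j, g j⟫ + θ ^ 2 * ‖g j‖ ^ 2) := by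
    rw [PiLp.norm_sq_eq_of_L2]
    refine sum_congr rfl fun j _ => ?_
    rw [dualMap_apply, norm_sub_sq_real, real_inner_smul_right, norm_smul, Real.norm_eq_abs,
      mul_pow, sq_abs]
    ring
  have hres : ‖w - dualMap U Z h𝓔 θ w‖ ^ 2 = θ ^ 2 * ∑ j, ‖g j‖ ^ 2 := by
    rw [PiLp.norm_sq_eq_of_L2, mul_sum]
    refine sum_congr rfl fun j _ => ?_
    rw [PiLp.sub_apply, dualMap_apply, sub_sub_cancel, norm_smul, Real.norm_eq_abs, mul_pow,
      sq_abs]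
  rw [hT, hres, PiLp.norm_sq_eq_of_L2, sum_add_distrib, sum_sub_distrib, ← mul_sum, ← mul_sum,
    hS, ← mul_assoc, div_mul_eq_mul_div, sq, mul_div_assoc, mul_div_cancel_left₀ _ hθ.ne']
  nlinarith

theorem iterate_dualMap_toLp {θ : ℝ} {v : ℕ → ι → E} {x : ℕ → Fin n → E}
    (hx : ∀ k, IsFixedPt (update U 𝓔 Z (v k)) (x (k + 1)))
    (hv : ∀ k j, v (k + 1) j = v k j - θ • ∑ i, Z i j • x (k + 1) i) (k : ℕ) :
    (dualMap U Z h𝓔 θ)^[k] (WithLp.toLp 2 (v 0)) = WithLp.toLp 2 (v k) := by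
  induction k with
  | zero => rfl
  | succ k ih =>
    rw [iterate_succ_apply', ih, dualMap_toLp]
    congr 1
    funext j
    rw [hv, eq_of_isFixedPt_update U Z h𝓔 (hx k) (isFixedPt_update_primal U Z h𝓔 _)]

theorem primal_eq_of_isFixedPt_dualMap {𝓔' : Finset (Fin n × Fin n)} (hsub : 𝓔' ⊆ 𝓔)
    (hL : lap 𝓔' = Z * Zᵀ) (hconn : (SimpleGraph.fromRel fun i j => (i, j) ∈ 𝓔').Connected)
    {θ : ℝ} (hθ : θ ≠ 0) {w : PiLp 2 (fun _ : ι => E)} (hw : IsFixedPt (dualMap U Z h𝓔 θ) w)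
    (i l : Fin n) : primal U 𝓔 Z w.ofLp i = primal U 𝓔 Z w.ofLp l := by
  set x := primal U 𝓔 Z w.ofLp
  have hZx (j : ι) : ∑ i, Z i j • x i = 0 := by
    have hj := congrArg (· j) hw.eq
    rw [dualMap_apply, sub_eq_self, smul_eq_zero] at hj
    exact hj.resolve_left hθ
  have hedges : ∑ e ∈ 𝓔', ‖x e.1 - x e.2‖ ^ 2 = 0 := by
    rw [← sum_norm_sum_smul_sq_of_lap_eq (fun e he => h𝓔 e (hsub he)) hL]
    simp [hZx]
  rw [sum_eq_zero_iff_of_nonneg fun _ _ => sq_nonneg _] at hedges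
  have hedge {a b : Fin n} (h : (a, b) ∈ 𝓔') : x a = x b := by
    simpa [sub_eq_zero] using hedges _ h
  refine hconn.preconnected.eq_of_forall_adj (fun a b hab => ?_) i l
  rcases (SimpleGraph.fromRel_adj _ a b).mp hab with ⟨-, h | h⟩
  exacts [hedge h, (hedge h).symm]

end GraphDR

open GraphDR

theorem proj_eq_starProjection {p : ℕ} (U : Submodule ℝ (EuclideanSpace ℝ (Fin p)))
    (v : EuclideanSpace ℝ (Fin p)) : proj U v = U.starProjection v := rfl

theorem stmt10_general {p n : ℕ} (U : Fin n → Submodule ℝ (EuclideanSpace ℝ (Fin p)))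
    (𝓔 𝓔' : Finset (Fin n × Fin n))
    (hord : ∀ e ∈ 𝓔, e.1 < e.2)
    (hsub : 𝓔' ⊆ 𝓔)
    (hconn' : (SimpleGraph.fromRel fun i j => (i, j) ∈ 𝓔').Connected)
    (Z : Matrix (Fin n) (Fin (n - 1)) ℝ)
    (hL : lap 𝓔' = Z * Zᵀ)
    (θ : ℝ) (hθ : θ ∈ Set.Ioo (0 : ℝ) 2)
    (x : ℕ → Fin n → EuclideanSpace ℝ (Fin p))
    (v : ℕ → Fin (n - 1) → EuclideanSpace ℝ (Fin p))
    (hx : ∀ k i, x (k + 1) i = proj (U i)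
      (((2 : ℝ) / (deg 𝓔 i : ℝ)) • (∑ e ∈ 𝓔.filter fun e => e.2 = i, x (k + 1) e.1) +
        ((1 : ℝ) / (deg 𝓔 i : ℝ)) • ∑ j, Z i j • v k j))
    (hv : ∀ k j, v (k + 1) j = v k j - θ • ∑ i, Z i j • x (k + 1) i) :
    ∃ (vstar : Fin (n - 1) → EuclideanSpace ℝ (Fin p))
      (xstar : EuclideanSpace ℝ (Fin p)),
      (∀ i, xstar ∈ U i) ∧
      (∀ j, Tendsto (fun k => v k j) atTop (𝓝 (vstar j))) ∧
      (∀ i, Tendsto (fun k => x k i) atTop (𝓝 xstar)) ∧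
      (∀ i, xstar = ((2 * (din 𝓔 i : ℝ)) / (deg 𝓔 i : ℝ)) • proj (U i) xstar +
        ((1 : ℝ) / (deg 𝓔 i : ℝ)) • ∑ j, proj (U i) (Z i j • vstar j)) := by
  simp only [proj_eq_starProjection] at hx ⊢
  have hxfix (k : ℕ) : IsFixedPt (update U 𝓔 Z (v k)) (x (k + 1)) := funext fun i => (hx k i).symm
  obtain ⟨w, hw, hlim⟩ := (dualMap U Z hord θ).exists_isFixedPt_tendsto_iterate
    (div_pos (sub_pos.2 hθ.2) hθ.1) (norm_dualMap_sq_add_le U Z hord hsub hL hθ.1)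
    (WithLp.toLp 2 (v 0))
  simp only [iterate_dualMap_toLp U Z hord hxfix hv] at hlim
  have hconst := primal_eq_of_isFixedPt_dualMap U Z hord hsub hL hconn' hθ.1.ne' hw
  obtain ⟨i₀⟩ := hconn'.nonempty
  refine ⟨w.ofLp, primal U 𝓔 Z w.ofLp i₀, fun i => hconst i i₀ ▸ primal_mem U 𝓔 Z _ i,
    fun j => ((PiLp.continuous_apply 2 _ j).tendsto w).comp hlim, fun i => ?_, fun i => ?_⟩
  · have hcont : Continuous fun w : PiLp 2 _ => primal U 𝓔 Z w.ofLp i :=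
      ((continuous_apply i).comp (primalₗ U Z hord).continuous_of_finiteDimensional).comp
        (PiLp.continuous_ofLp 2 _)
    rw [← hconst i i₀, ← tendsto_add_atTop_iff_nat 1]
    simpa only [eq_of_isFixedPt_update U Z hord (hxfix _) (isFixedPt_update_primal U Z hord _),
      comp_def] using (hcont.tendsto w).comp hlim
  · rw [← update_const, ← funext fun i => hconst i i₀]
    exact (hconst i₀ i).trans (congrFun (isFixedPt_update_primal U Z hord _) i).symm

theorem stmt10 {p n : ℕ} (U : Fin n → Submodule ℝ (EuclideanSpace ℝ (Fin p)))
    (𝓔 𝓔' : Finset (Fin n × Fin n))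
    (hord : ∀ e ∈ 𝓔, e.1 < e.2)
    (hsub : 𝓔' ⊆ 𝓔)
    (hconn : (SimpleGraph.fromRel fun i j => (i, j) ∈ 𝓔).Connected)
    (hconn' : (SimpleGraph.fromRel fun i j => (i, j) ∈ 𝓔').Connected)
    (Z : Matrix (Fin n) (Fin (n - 1)) ℝ)
    (hZrank : Z.rank = n - 1)
    (hL : lap 𝓔' = Z * Zᵀ)
    (θ : ℝ) (hθ : θ ∈ Set.Ioo (0 : ℝ) 2)
    (x : ℕ → Fin n → EuclideanSpace ℝ (Fin p))
    (v : ℕ → Fin (n - 1) → EuclideanSpace ℝ (Fin p))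
    (hx : ∀ k i, x (k + 1) i = proj (U i)
      (((2 : ℝ) / (deg 𝓔 i : ℝ)) • (∑ e ∈ 𝓔.filter fun e => e.2 = i, x (k + 1) e.1) +
        ((1 : ℝ) / (deg 𝓔 i : ℝ)) • ∑ j, Z i j • v k j))
    (hv : ∀ k j, v (k + 1) j = v k j - θ • ∑ i, Z i j • x (k + 1) i) :
    ∃ (vstar : Fin (n - 1) → EuclideanSpace ℝ (Fin p))
      (xstar : EuclideanSpace ℝ (Fin p)),
      (∀ i, xstar ∈ U i) ∧
      (∀ j, Tendsto (fun k => v k j) atTop (𝓝 (vstar j))) ∧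
      (∀ i, Tendsto (fun k => x k i) atTop (𝓝 xstar)) ∧
      (∀ i, xstar = ((2 * (din 𝓔 i : ℝ)) / (deg 𝓔 i : ℝ)) • proj (U i) xstar +
        ((1 : ℝ) / (deg 𝓔 i : ℝ)) • ∑ j, proj (U i) (Z i j • vstar j)) :=
  stmt10_general U 𝓔 𝓔' hord hsub hconn' Z hL θ hθ x v hx hv
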